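/- arXiv:0708.1745 — 5 statements merged into one kernel-verified Lean document; each statement's English description precedes it below -/
import Mathlib

section
/- For every natural number n, every natural number p with p ≤ n, and all real numbers K, L, M, the following identity holds (this is the combinatorial identity equivalent to the associativity of the Eholzer product, with K = 2k, L = 2l, M = 2m): ∑_{r=0}^{n-p} C(L+r-1, r) · C(K+L+n+r-1, p) · C(M+n-r-1, n-p-r) = ∑_{s=0}^{p} C(L+s-1, s) · C(K+n-s-1, p-s) · C(L+M+n+s-1, n-p). -/
/-- Generalized binomial coefficient `C(x, m) = x(x-1)⋯(x-m+1)/m!` for a real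
number `x` and a natural number `m`. -/
noncomputable def gbinom (x : ℝ) (m : ℕ) : ℝ :=
  (∏ i ∈ Finset.range m, (x - i)) / m.factorial

open Finset in
lemma gbinom_eq_choose (x : ℝ) (m : ℕ) : gbinom x m = Ring.choose x m := by
  have hd : ∀ k : ℕ, (descPochhammer ℤ k).smeval x = ∏ i ∈ Finset.range k, (x - i) := by
    intro k
    induction k with
    | zero => simp [descPochhammer_zero, Polynomial.smeval_one]
    | succ k ih =>
        rw [descPochhammer_succ_right, Polynomial.smeval_mul, ih, Polynomial.smeval_sub,
          Polynomial.smeval_X, Polynomial.smeval_natCast, Finset.prod_range_succ]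
        simp
  have h := Ring.descPochhammer_eq_factorial_smul_choose (R := ℝ) x m
  rw [hd] at h
  rw [gbinom, h, nsmul_eq_mul]
  field_simp

lemma gbinom_vandermonde (x y : ℝ) (m : ℕ) :
    gbinom (x + y) m = ∑ i ∈ Finset.range (m + 1), gbinom x i * gbinom y (m - i) := by
  simp only [gbinom_eq_choose]
  rw [Ring.add_choose_eq m (Commute.all x y),
    Finset.Nat.sum_antidiagonal_eq_sum_range_succ_mk]

lemma gbinom_mul_gbinom (x : ℝ) (a b : ℕ) :
    gbinom x b * gbinom (x - b) a = ((a + b).choose b : ℝ) * gbinom x (a + b) := by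
  have hsplit : ∏ i ∈ Finset.range (a + b), (x - i)
      = (∏ i ∈ Finset.range b, (x - i)) * ∏ i ∈ Finset.range a, (x - b - i) := by
    rw [add_comm a b, Finset.prod_range_add]
    congr 1
    refine Finset.prod_congr rfl fun i _ => ?_
    push_cast
    ring
  have hfac : ((a + b).choose b : ℝ) * a.factorial * b.factorial = (a + b).factorial := by
    have := Nat.choose_mul_factorial_mul_factorial (Nat.le_add_left b a)
    rw [Nat.add_sub_cancel] at this
    exact_mod_cast by rw [← this]; ring
  have ha : (a.factorial : ℝ) ≠ 0 := Nat.cast_ne_zero.mpr a.factorial_ne_zero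
  have hb : (b.factorial : ℝ) ≠ 0 := Nat.cast_ne_zero.mpr b.factorial_ne_zero
  have hab : ((a + b).factorial : ℝ) ≠ 0 := Nat.cast_ne_zero.mpr (a + b).factorial_ne_zero
  rw [gbinom, gbinom, gbinom, hsplit]
  field_simp
  rw [← hfac]
  ring

lemma gbinom_reflect (X : ℝ) (i : ℕ) :
    gbinom (X + i - 1) i = (-1) ^ i * gbinom (-X) i := by
  rw [gbinom, gbinom]
  have h1 : ∏ j ∈ Finset.range i, (X + i - 1 - j) = ∏ j ∈ Finset.range i, (X + j) := by
    rw [← Finset.prod_range_reflect]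
    refine Finset.prod_congr rfl fun j hj => ?_
    have hj' : j < i := Finset.mem_range.mp hj
    have : ((i - 1 - j : ℕ) : ℝ) = (i : ℝ) - 1 - j := by
      have h2 : j + 1 ≤ i := hj'
      push_cast [Nat.cast_sub (by omega : 1 + j ≤ i), Nat.sub_sub]
      ring
    rw [this]; ring
  have h2 : ∏ j ∈ Finset.range i, (X + j) = ∏ j ∈ Finset.range i, (-1 : ℝ) * (-X - j) :=
    Finset.prod_congr rfl fun j _ => by ring
  rw [h1, h2, Finset.prod_mul_distrib, Finset.prod_const, Finset.card_range, mul_div_assoc]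

lemma gbinom_conv (X Y : ℝ) (m : ℕ) :
    gbinom (X + Y + m - 1) m
      = ∑ i ∈ Finset.range (m + 1), gbinom (X + i - 1) i * gbinom (Y + m - i - 1) (m - i) := by
  have key : ∀ i ∈ Finset.range (m + 1),
      gbinom (X + i - 1) i * gbinom (Y + m - i - 1) (m - i)
        = (-1) ^ m * (gbinom (-X) i * gbinom (-Y) (m - i)) := by
    intro i hi
    have hi' : i ≤ m := Nat.lt_succ_iff.mp (Finset.mem_range.mp hi)
    have hYarg : Y + (m : ℝ) - i - 1 = Y + ((m - i : ℕ) : ℝ) - 1 := by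
      rw [Nat.cast_sub hi']; ring
    rw [gbinom_reflect X i, hYarg, gbinom_reflect Y (m - i)]
    have hpow : (-1 : ℝ) ^ i * (-1 : ℝ) ^ (m - i) = (-1) ^ m := by
      rw [← pow_add, Nat.add_sub_cancel' hi']
    linear_combination gbinom (-X) i * gbinom (-Y) (m - i) * hpow
  rw [Finset.sum_congr rfl key, ← Finset.mul_sum, ← gbinom_vandermonde,
    show -X + -Y = -(X + Y) by ring, gbinom_reflect (X + Y) m]

lemma gbinom_combine (L : ℝ) (r b : ℕ) :
    gbinom (L + r - 1) r * gbinom (L + r + b - 1) b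
      = ((r + b).choose b : ℝ) * gbinom (L + r + b - 1) (r + b) := by
  have h := gbinom_mul_gbinom (L + r + b - 1) r b
  rw [show (L + (r : ℝ) + b - 1) - b = L + r - 1 by ring] at h
  rw [mul_comm, h]

theorem eholzer_assoc_identity (n p : ℕ) (hp : p ≤ n) (K L M : ℝ) :
    ∑ r ∈ Finset.range (n - p + 1),
      gbinom (L + r - 1) r * gbinom (K + L + n + r - 1) p *
        gbinom (M + n - r - 1) (n - p - r)
      =
    ∑ s ∈ Finset.range (p + 1),
      gbinom (L + s - 1) s * gbinom (K + n - s - 1) (p - s) *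
        gbinom (L + M + n + s - 1) (n - p) := by
  set q := n - p with hq
  have hpq : p + q = n := Nat.add_sub_cancel' hp
  have hn : (n : ℝ) = (p : ℝ) + q := by exact_mod_cast hpq.symm
  have hLHS : ∑ r ∈ Finset.range (q + 1),
      gbinom (L + r - 1) r * gbinom (K + L + n + r - 1) p *
        gbinom (M + n - r - 1) (q - r)
      = ∑ r ∈ Finset.range (q + 1), ∑ b ∈ Finset.range (p + 1),
          ((r + b).choose b : ℝ) * gbinom (L + r + b - 1) (r + b) *
            gbinom (K + n - b - 1) (p - b) * gbinom (M + n - r - 1) (q - r) := by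
    refine Finset.sum_congr rfl fun r _ => ?_
    have e2 : gbinom (K + L + n + r - 1) p
        = ∑ b ∈ Finset.range (p + 1),
            gbinom (L + r + b - 1) b * gbinom (K + n - b - 1) (p - b) := by
      rw [show K + L + (n : ℝ) + r - 1 = (L + r) + (K + n - p) + p - 1 by ring,
        gbinom_conv (L + r) (K + (n : ℝ) - p) p]
      refine Finset.sum_congr rfl fun b _ => ?_
      rw [show (K + (n : ℝ) - p) + p - b - 1 = K + n - b - 1 by ring]
    rw [e2, Finset.mul_sum, Finset.sum_mul]
    refine Finset.sum_congr rfl fun b _ => ?_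
    have h := gbinom_combine L r b
    linear_combination gbinom (K + (n : ℝ) - b - 1) (p - b) * gbinom (M + n - r - 1) (q - r) * h
  have hRHS : ∑ s ∈ Finset.range (p + 1),
      gbinom (L + s - 1) s * gbinom (K + n - s - 1) (p - s) *
        gbinom (L + M + n + s - 1) q
      = ∑ s ∈ Finset.range (p + 1), ∑ a ∈ Finset.range (q + 1),
          ((s + a).choose a : ℝ) * gbinom (L + s + a - 1) (s + a) *
            gbinom (K + n - s - 1) (p - s) * gbinom (M + n - a - 1) (q - a) := by
    refine Finset.sum_congr rfl fun s _ => ?_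
    have e2 : gbinom (L + M + n + s - 1) q
        = ∑ a ∈ Finset.range (q + 1),
            gbinom (L + s + a - 1) a * gbinom (M + n - a - 1) (q - a) := by
      rw [show L + M + (n : ℝ) + s - 1 = (L + s) + (M + p) + q - 1 by rw [hn]; ring,
        gbinom_conv (L + s) (M + (p : ℝ)) q]
      refine Finset.sum_congr rfl fun a _ => ?_
      rw [show (M + (p : ℝ)) + q - a - 1 = M + n - a - 1 by rw [hn]; ring]
    rw [e2, Finset.mul_sum]
    refine Finset.sum_congr rfl fun a _ => ?_
    have h := gbinom_combine L s a
    linear_combination gbinom (K + (n : ℝ) - s - 1) (p - s) * gbinom (M + n - a - 1) (q - a) * h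
  rw [show (∑ r ∈ Finset.range (n - p + 1),
      gbinom (L + r - 1) r * gbinom (K + L + n + r - 1) p *
        gbinom (M + n - r - 1) (n - p - r))
      = ∑ r ∈ Finset.range (q + 1),
      gbinom (L + r - 1) r * gbinom (K + L + n + r - 1) p *
        gbinom (M + n - r - 1) (q - r) from rfl, hLHS, hRHS, Finset.sum_comm]
  refine Finset.sum_congr rfl fun r _ => Finset.sum_congr rfl fun b _ => ?_
  rw [Nat.add_comm b r, show L + (b : ℝ) + r - 1 = L + r + b - 1 by ring]
  have hc : (r + b).choose r = (r + b).choose b := by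
    have h := Nat.choose_symm (Nat.le_add_right r b)
    rw [Nat.add_sub_cancel_left] at h
    exact h.symm
  rw [hc]
end

section
/- Let N, u, v be natural numbers with u ≤ N and v ≤ N. Then ∑_{r=0}^{N} (-1)^r · C(N,r) · C(r, N-u) · C(N-r, v) equals (-1)^{N-u} · C(N,u) if u = v, and equals 0 if u ≠ v. Here C(a,b) denotes the ordinary binomial coefficient of natural numbers (equal to 0 when b > a). -/
lemma aux_kron (u v : ℕ) :
    ∑ s ∈ Finset.range (u + 1), (-1 : ℤ) ^ s * (u.choose s) * ((u - s).choose v)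
      = if u = v then 1 else 0 := by
  rcases lt_or_ge u v with h | h
  · rw [if_neg (by omega)]
    apply Finset.sum_eq_zero
    intro s hs
    rw [Nat.choose_eq_zero_of_lt (show u - s < v by omega)]
    push_cast; ring
  · have step : ∀ s ∈ Finset.range (u + 1),
        (-1 : ℤ) ^ s * (u.choose s) * ((u - s).choose v)
          = (u.choose v : ℤ) * ((-1 : ℤ) ^ s * ((u - v).choose s)) := by
      intro s hs
      simp only [Finset.mem_range] at hs
      rcases le_or_gt v (u - s) with h1 | h1
      · have key : u.choose s * (u - s).choose v = u.choose v * (u - v).choose s := by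
          have h2 := Nat.choose_mul (n := u) (k := u - s) (s := v) h1
          rw [Nat.choose_symm (by omega)] at h2
          rw [h2]
          congr 1
          rw [show u - s - v = (u - v) - s by omega, Nat.choose_symm (by omega)]
        have : ((u.choose s : ℤ)) * ((u - s).choose v) = (u.choose v : ℤ) * ((u - v).choose s) := by
          exact_mod_cast congrArg (Nat.cast : ℕ → ℤ) key
        linear_combination (-1 : ℤ) ^ s * this
      · rw [Nat.choose_eq_zero_of_lt h1,
            Nat.choose_eq_zero_of_lt (show u - v < s by omega)]
        push_cast; ring
    rw [Finset.sum_congr rfl step, ← Finset.mul_sum]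
    have trunc : ∑ s ∈ Finset.range (u + 1), (-1 : ℤ) ^ s * ((u - v).choose s)
        = ∑ s ∈ Finset.range ((u - v) + 1), (-1 : ℤ) ^ s * ((u - v).choose s) := by
      symm
      apply Finset.sum_subset (Finset.range_subset_range.2 (by omega))
      intro s hs hns
      simp only [Finset.mem_range] at hs hns
      rw [Nat.choose_eq_zero_of_lt (by omega)]
      ring
    rw [trunc, Int.alternating_sum_range_choose]
    rcases eq_or_ne u v with rfl | hne
    · simp
    · rw [if_neg (by omega), if_neg hne, mul_zero]

theorem kronecker_binomial_sum (N u v : ℕ) (hu : u ≤ N) (hv : v ≤ N) :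
    ∑ r ∈ Finset.range (N + 1),
      (-1 : ℤ) ^ r * (N.choose r) * (r.choose (N - u)) * ((N - r).choose v)
      =
    if u = v then (-1 : ℤ) ^ (N - u) * (N.choose u) else 0 := by
  have h1 : ∑ r ∈ Finset.range (N + 1),
      (-1 : ℤ) ^ r * (N.choose r) * (r.choose (N - u)) * ((N - r).choose v)
      = ∑ r ∈ Finset.Ico (N - u) (N + 1),
      (-1 : ℤ) ^ r * (N.choose r) * (r.choose (N - u)) * ((N - r).choose v) := by
    symm
    apply Finset.sum_subset
    · intro r hr
      simp only [Finset.mem_Ico, Finset.mem_range] at *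
      omega
    · intro r hr hnr
      simp only [Finset.mem_Ico, Finset.mem_range] at hr hnr
      rw [Nat.choose_eq_zero_of_lt (show r < N - u by omega)]
      push_cast; ring
  rw [h1, Finset.sum_Ico_eq_sum_range]
  have hNu : N + 1 - (N - u) = u + 1 := by omega
  rw [hNu]
  have step : ∀ s ∈ Finset.range (u + 1),
      (-1 : ℤ) ^ (N - u + s) * (N.choose (N - u + s)) * ((N - u + s).choose (N - u))
        * ((N - (N - u + s)).choose v)
      = ((-1 : ℤ) ^ (N - u) * (N.choose u)) *
        ((-1 : ℤ) ^ s * (u.choose s) * ((u - s).choose v)) := by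
    intro s hs
    simp only [Finset.mem_range] at hs
    have key : N.choose (N - u + s) * (N - u + s).choose (N - u)
        = N.choose u * u.choose s := by
      have h2 := Nat.choose_mul (n := N) (k := N - u + s) (s := N - u)
        (by omega)
      rw [show N - (N - u) = u by omega, show N - u + s - (N - u) = s by omega,
        Nat.choose_symm hu] at h2
      exact h2
    have keyZ : (N.choose (N - u + s) : ℤ) * ((N - u + s).choose (N - u))
        = (N.choose u : ℤ) * (u.choose s) := by exact_mod_cast congrArg (Nat.cast : ℕ → ℤ) key
    rw [show N - (N - u + s) = u - s by omega, pow_add]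
    linear_combination (-1 : ℤ) ^ (N - u) * (-1 : ℤ) ^ s * ((u - s).choose v : ℤ) * keyZ
  rw [Finset.sum_congr rfl step, ← Finset.mul_sum, aux_kron]
  rcases eq_or_ne u v with rfl | hne
  · simp
  · simp [hne]
end

section
/- For every natural number n and all real numbers A, B: ∑_{k=0}^{n} C(A+k, n-k) · C(B+n-k, k) = ∑_{p=0}^{⌊n/2⌋} C(A+B+n-1-2p, n-2p). -/
open Finset Polynomial

lemma gbinom_zero (x : ℝ) : gbinom x 0 = 1 := by simp [gbinom]

lemma gbinom_pascal (x : ℝ) (m : ℕ) :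
    gbinom x (m + 1) = gbinom (x - 1) (m + 1) + gbinom (x - 1) m := by
  have h1 : ∏ i ∈ range (m+1), (x - i) = (∏ i ∈ range m, (x - 1 - i)) * x := by
    rw [Finset.prod_range_succ' (fun i => x - i) m]
    simp only [Nat.cast_zero, sub_zero]
    congr 1
    exact Finset.prod_congr rfl fun i _ => by push_cast; ring
  have h2 : ∏ i ∈ range (m+1), (x - 1 - i) = (∏ i ∈ range m, (x - 1 - i)) * (x - 1 - m) :=
    Finset.prod_range_succ _ m
  have hf : ((m+1).factorial : ℝ) = (m+1) * m.factorial := by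
    rw [Nat.factorial_succ]; push_cast; ring
  have hm : (m.factorial : ℝ) ≠ 0 := Nat.cast_ne_zero.2 m.factorial_ne_zero
  have hm1 : ((m+1 : ℕ) : ℝ) ≠ 0 := by positivity
  simp only [gbinom, h1, h2, hf]
  field_simp
  ring

lemma gbinom_nat_lt {j m : ℕ} (h : j < m) : gbinom (j : ℝ) m = 0 := by
  unfold gbinom
  rw [Finset.prod_eq_zero (Finset.mem_range.2 h) (by simp)]
  simp

lemma gbinom_nat_self (m : ℕ) : gbinom (m : ℝ) m = 1 := by
  unfold gbinom
  have : ∏ i ∈ range m, ((m:ℝ) - i) = ∏ i ∈ range m, ((m - i : ℕ) : ℝ) :=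
    Finset.prod_congr rfl fun i hi => by
      rw [Nat.cast_sub (le_of_lt (mem_range.1 hi))]
  rw [this, ← Nat.cast_prod]
  have h2 : ∏ i ∈ range m, (m - i) = m.factorial := by
    have h := Finset.prod_range_reflect (fun j => j + 1) m
    rw [Finset.prod_range_add_one_eq_factorial] at h
    rw [← h]
    exact Finset.prod_congr rfl fun i hi => by
      have := Finset.mem_range.1 hi; omega
  rw [h2, div_self (Nat.cast_ne_zero.2 m.factorial_ne_zero)]

noncomputable def LL (n : ℕ) (A B : ℝ) : ℝ :=
  ∑ k ∈ Finset.range (n + 1), gbinom (A + k) (n - k) * gbinom (B + n - k) k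

noncomputable def RR (n : ℕ) (C : ℝ) : ℝ :=
  ∑ p ∈ Finset.range (n / 2 + 1), gbinom (C + n - 1 - 2 * p) (n - 2 * p)

lemma rec1 (n : ℕ) (A B : ℝ) :
    LL (n+1) A B = LL (n+1) (A-1) B + LL n (A-1) (B+1) := by
  have hL : LL (n+1) A B
      = (∑ k ∈ range (n+1),
          (gbinom ((A-1) + (k:ℝ)) ((n+1) - k) * gbinom (B + ((n+1:ℕ):ℝ) - k) k
           + gbinom ((A-1) + (k:ℝ)) (n - k) * gbinom ((B+1) + (n:ℝ) - k) k))
        + gbinom (B + ((n+1:ℕ):ℝ) - ((n+1:ℕ):ℝ)) (n+1) := by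
    unfold LL
    rw [Finset.sum_range_succ]
    congr 1
    · refine Finset.sum_congr rfl fun k hk => ?_
      have hk' : k ≤ n := Nat.lt_succ_iff.1 (Finset.mem_range.1 hk)
      have h1 : (n+1) - k = (n - k) + 1 := by omega
      rw [h1, gbinom_pascal]
      rw [show B + ((n+1:ℕ):ℝ) - (k:ℝ) = (B+1) + (n:ℝ) - k by push_cast; ring]
      rw [show A + (k:ℝ) - 1 = (A-1) + (k:ℝ) by ring]
      ring
    · rw [Nat.sub_self, gbinom_zero, one_mul]
  have hR : LL (n+1) (A-1) B
      = (∑ k ∈ range (n+1), gbinom ((A-1) + (k:ℝ)) ((n+1) - k) * gbinom (B + ((n+1:ℕ):ℝ) - k) k)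
        + gbinom (B + ((n+1:ℕ):ℝ) - ((n+1:ℕ):ℝ)) (n+1) := by
    unfold LL
    rw [Finset.sum_range_succ, Nat.sub_self, gbinom_zero, one_mul]
  rw [hL, hR, Finset.sum_add_distrib]
  unfold LL
  ring


lemma rec2 (n : ℕ) (A B : ℝ) :
    LL (n+1) A B = LL (n+1) A (B-1) + LL n (A+1) (B-1) := by
  have hL : LL (n+1) A B
      = (∑ j ∈ range (n+1),
          (gbinom (A + ((j+1:ℕ):ℝ)) ((n+1) - (j+1)) * gbinom ((B-1) + ((n+1:ℕ):ℝ) - ((j+1:ℕ):ℝ)) (j+1)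
           + gbinom ((A+1) + (j:ℝ)) (n - j) * gbinom ((B-1) + (n:ℝ) - j) j))
        + gbinom (A + ((0:ℕ):ℝ)) ((n+1) - 0) := by
    unfold LL
    rw [Finset.sum_range_succ']
    congr 1
    · refine Finset.sum_congr rfl fun j hj => ?_
      rw [gbinom_pascal (B + ((n+1:ℕ):ℝ) - ((j+1:ℕ):ℝ)) j]
      rw [show B + ((n+1:ℕ):ℝ) - ((j+1:ℕ):ℝ) - 1 = (B-1) + ((n+1:ℕ):ℝ) - ((j+1:ℕ):ℝ) by push_cast; ring]
      rw [show (B-1) + ((n+1:ℕ):ℝ) - ((j+1:ℕ):ℝ) = (B-1) + (n:ℝ) - j by push_cast; ring]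
      rw [show A + ((j+1:ℕ):ℝ) = (A+1) + (j:ℝ) by push_cast; ring]
      rw [show (n+1) - (j+1) = n - j by omega]
      ring
    · simp [gbinom_zero]
  have hR : LL (n+1) A (B-1)
      = (∑ j ∈ range (n+1),
          gbinom (A + ((j+1:ℕ):ℝ)) ((n+1) - (j+1)) * gbinom ((B-1) + ((n+1:ℕ):ℝ) - ((j+1:ℕ):ℝ)) (j+1))
        + gbinom (A + ((0:ℕ):ℝ)) ((n+1) - 0) := by
    unfold LL
    rw [Finset.sum_range_succ']
    congr 1
    simp [gbinom_zero]
  rw [hL, hR, Finset.sum_add_distrib]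
  unfold LL
  have : ∀ j ∈ range (n+1),
      gbinom ((B-1) + ((n+1:ℕ):ℝ) - ((j+1:ℕ):ℝ)) (j+1)
        = gbinom ((B-1) + (n:ℝ) - j) (j+1) := by
    intro j hj
    rw [show (B-1) + ((n+1:ℕ):ℝ) - ((j+1:ℕ):ℝ) = (B-1) + (n:ℝ) - j by push_cast; ring]
  ring


lemma pascal_term (C : ℝ) (n p : ℕ) (h : 2*p ≤ n) :
    gbinom (C + ((n+1:ℕ):ℝ) - 1 - 2*(p:ℝ)) ((n+1) - 2*p)
    = gbinom ((C-1) + ((n+1:ℕ):ℝ) - 1 - 2*(p:ℝ)) ((n+1) - 2*p)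
      + gbinom (C + (n:ℝ) - 1 - 2*(p:ℝ)) (n - 2*p) := by
  have h1 : (n+1) - 2*p = (n - 2*p) + 1 := by omega
  rw [h1, gbinom_pascal]
  congr 1
  · congr 1
    push_cast; ring
  · congr 1
    push_cast; ring


lemma recR (n : ℕ) (C : ℝ) :
    RR (n+1) C = RR (n+1) (C-1) + RR n C := by
  rcases Nat.even_or_odd n with ⟨m, hm⟩ | ⟨m, hm⟩
  · -- n = m + m
    have hh : (n+1)/2 + 1 = n/2 + 1 := by omega
    unfold RR
    rw [hh, ← Finset.sum_add_distrib]
    refine Finset.sum_congr rfl fun p hp => ?_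
    have hp' : 2*p ≤ n := by
      have := Finset.mem_range.1 hp; omega
    exact pascal_term C n p hp'
  · -- n = 2m+1
    have h1 : (n+1)/2 + 1 = (m + 1) + 1 := by omega
    have h2 : n/2 + 1 = m + 1 := by omega
    unfold RR
    rw [h1, h2, Finset.sum_range_succ, Finset.sum_range_succ
      (fun p => gbinom ((C-1) + ((n+1:ℕ):ℝ) - 1 - 2*(p:ℝ)) ((n+1) - 2*p)) (m+1)]
    have hz : (n+1) - 2*(m+1) = 0 := by omega
    rw [hz, gbinom_zero, gbinom_zero]
    rw [show (∑ p ∈ range (m+1), gbinom (C + ((n+1:ℕ):ℝ) - 1 - 2*(p:ℝ)) ((n+1) - 2*p))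
        = ∑ p ∈ range (m+1), (gbinom ((C-1) + ((n+1:ℕ):ℝ) - 1 - 2*(p:ℝ)) ((n+1) - 2*p)
            + gbinom (C + (n:ℝ) - 1 - 2*(p:ℝ)) (n - 2*p)) from
      Finset.sum_congr rfl fun p hp => pascal_term C n p (by have := Finset.mem_range.1 hp; omega)]
    rw [Finset.sum_add_distrib]
    ring

lemma term_cast (n k : ℕ) (hk : k ≤ n) :
    gbinom ((0:ℝ) + k) (n - k) * gbinom ((0:ℝ) + n - k) k
      = gbinom ((k:ℕ):ℝ) (n - k) * gbinom (((n - k:ℕ):ℕ):ℝ) k := by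
  rw [show (0:ℝ) + (k:ℝ) = ((k:ℕ):ℝ) by ring]
  rw [show (0:ℝ) + (n:ℝ) - (k:ℝ) = ((n - k:ℕ):ℝ) by rw [Nat.cast_sub hk]; ring]


lemma LL_zero (n : ℕ) : LL n 0 0 = if Even n then 1 else 0 := by
  unfold LL
  rcases Nat.even_or_odd n with ⟨m, hm⟩ | ⟨m, hm⟩
  · rw [if_pos ⟨m, hm⟩]
    rw [Finset.sum_eq_single_of_mem m (Finset.mem_range.2 (by omega))]
    · rw [term_cast n m (by omega), show n - m = m by omega,
        gbinom_nat_self]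
      norm_num
    · intro k hk hkm
      have hk' : k ≤ n := Nat.lt_succ_iff.1 (Finset.mem_range.1 hk)
      rw [term_cast n k hk']
      rcases lt_or_gt_of_ne (show k ≠ n - k by omega) with h | h
      · rw [gbinom_nat_lt h, zero_mul]
      · rw [gbinom_nat_lt h, mul_zero]
  · rw [if_neg (by rw [Nat.even_iff]; omega)]
    refine Finset.sum_eq_zero fun k hk => ?_
    have hk' : k ≤ n := Nat.lt_succ_iff.1 (Finset.mem_range.1 hk)
    rw [term_cast n k hk']
    rcases lt_or_gt_of_ne (show k ≠ n - k by omega) with h | h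
    · rw [gbinom_nat_lt h, zero_mul]
    · rw [gbinom_nat_lt h, mul_zero]


lemma RR_zero (n : ℕ) : RR n 0 = if Even n then 1 else 0 := by
  unfold RR
  have hterm : ∀ p, 2*p < n →
      gbinom ((0:ℝ) + n - 1 - 2*(p:ℝ)) (n - 2*p) = 0 := by
    intro p hp
    rw [show (0:ℝ) + n - 1 - 2*(p:ℝ) = ((n - 1 - 2*p : ℕ):ℝ) by
      rw [Nat.cast_sub (show 2*p ≤ n - 1 by omega), Nat.cast_sub (show 1 ≤ n by omega)]
      push_cast; ring]
    exact gbinom_nat_lt (by omega)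
  rcases Nat.even_or_odd n with ⟨m, hm⟩ | ⟨m, hm⟩
  · rw [if_pos ⟨m, hm⟩]
    rw [Finset.sum_eq_single_of_mem (n/2) (Finset.mem_range.2 (by omega))]
    · rw [show n - 2*(n/2) = 0 by omega, gbinom_zero]
    · intro p hp hpm
      exact hterm p (by have := Finset.mem_range.1 hp; omega)
  · rw [if_neg (by rw [Nat.even_iff]; omega)]
    refine Finset.sum_eq_zero fun p hp => ?_
    exact hterm p (by have := Finset.mem_range.1 hp; omega)


lemma base0 (n : ℕ) : LL n 0 0 = RR n 0 := by rw [LL_zero, RR_zero]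


noncomputable def gpoly (c : ℝ) (m : ℕ) : ℝ[X] :=
  (∏ i ∈ range m, (X + Polynomial.C (c - i))) * Polynomial.C ((m.factorial : ℝ)⁻¹)

lemma eval_gpoly (c : ℝ) (m : ℕ) (x : ℝ) : (gpoly c m).eval x = gbinom (x + c) m := by
  simp only [gpoly, gbinom, eval_mul, eval_prod, eval_add, eval_X, eval_C, div_eq_mul_inv]
  congr 1
  exact Finset.prod_congr rfl fun i _ => by ring

lemma exists_poly_LA (n : ℕ) (B : ℝ) : ∃ p : ℝ[X], ∀ A, p.eval A = LL n A B := by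
  refine ⟨∑ k ∈ range (n+1), Polynomial.C (gbinom (B + n - k) k) * gpoly (k : ℝ) (n - k), ?_⟩
  intro A
  simp only [eval_finset_sum, eval_mul, eval_C, eval_gpoly, LL]
  exact Finset.sum_congr rfl fun k _ => by ring

lemma exists_poly_LB (n : ℕ) (A : ℝ) : ∃ p : ℝ[X], ∀ B, p.eval B = LL n A B := by
  refine ⟨∑ k ∈ range (n+1), Polynomial.C (gbinom (A + k) (n - k)) * gpoly ((n : ℝ) - k) k, ?_⟩
  intro B
  simp only [eval_finset_sum, eval_mul, eval_C, eval_gpoly, LL]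
  refine Finset.sum_congr rfl fun k _ => ?_
  rw [show B + ((n:ℝ) - k) = B + n - k by ring]

lemma exists_poly_R (n : ℕ) (c : ℝ) : ∃ p : ℝ[X], ∀ x, p.eval x = RR n (x + c) := by
  refine ⟨∑ q ∈ range (n/2+1), gpoly (c + n - 1 - 2 * q) (n - 2*q), ?_⟩
  intro x
  simp only [eval_finset_sum, eval_gpoly, RR]
  refine Finset.sum_congr rfl fun q _ => ?_
  rw [show x + (c + n - 1 - 2*q) = x + c + n - 1 - 2*q by ring]

lemma const_of_step {f : ℝ → ℝ} (p : ℝ[X]) (hp : ∀ x, p.eval x = f x)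
    (h : ∀ x, f x = f (x - 1)) (x : ℝ) : f x = f 0 := by
  have hn : ∀ m : ℕ, f (m : ℝ) = f 0 := by
    intro m
    induction m with
    | zero => simp
    | succ m ih => rw [show ((m+1:ℕ):ℝ) = (m:ℝ) + 1 by push_cast; ring, h, add_sub_cancel_right, ih]
  have hq : p - Polynomial.C (f 0) = 0 := by
    apply Polynomial.eq_zero_of_infinite_isRoot
    apply Set.Infinite.mono (s := Set.range (Nat.cast : ℕ → ℝ))
    · rintro _ ⟨m, rfl⟩
      simp [Polynomial.IsRoot, hp, hn]
    · exact Set.infinite_range_of_injective Nat.cast_injective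
  have := congrArg (Polynomial.eval x) hq
  simp [hp] at this
  linarith [this]

theorem key : ∀ n : ℕ, ∀ A B : ℝ, LL n A B = RR n (A + B) := by
  intro n
  induction n with
  | zero =>
    intro A B
    simp [LL, RR, gbinom_zero]
  | succ n ih =>
    -- step in A
    have h1 : ∀ A B : ℝ, LL (n+1) A B - RR (n+1) (A + B)
        = LL (n+1) (A-1) B - RR (n+1) ((A-1) + B) := by
      intro A B
      have e1 := rec1 n A B
      have e2 := recR n (A + B)
      have e3 := ih (A-1) (B+1)
      rw [show (A-1) + (B+1) = A + B by ring] at e3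
      rw [show (A-1) + B = A + B - 1 by ring]
      linarith
    have h2 : ∀ A B : ℝ, LL (n+1) A B - RR (n+1) (A + B)
        = LL (n+1) A (B-1) - RR (n+1) (A + (B-1)) := by
      intro A B
      have e1 := rec2 n A B
      have e2 := recR n (A + B)
      have e3 := ih (A+1) (B-1)
      rw [show (A+1) + (B-1) = A + B by ring] at e3
      rw [show A + (B-1) = A + B - 1 by ring]
      linarith
    intro A B
    -- constancy in A for fixed B
    obtain ⟨p1, hp1⟩ := exists_poly_LA (n+1) B
    obtain ⟨p2, hp2⟩ := exists_poly_R (n+1) B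
    have cA := const_of_step (f := fun A => LL (n+1) A B - RR (n+1) (A + B)) (p1 - p2)
      (by intro x; simp [hp1, hp2]) (by intro x; exact h1 x B) A
    -- constancy in B at A = 0
    obtain ⟨q1, hq1⟩ := exists_poly_LB (n+1) 0
    obtain ⟨q2, hq2⟩ := exists_poly_R (n+1) 0
    have cB := const_of_step (f := fun B => LL (n+1) 0 B - RR (n+1) (0 + B)) (q1 - q2)
      (by intro x; rw [eval_sub, hq1, hq2, show x + (0:ℝ) = 0 + x by ring]) (by intro x; exact h2 0 x) B
    have hb : LL (n+1) (0:ℝ) 0 - RR (n+1) ((0:ℝ) + 0) = 0 := by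
      rw [show (0:ℝ) + 0 = 0 by ring, base0 (n+1)]; ring
    rw [hb] at cB
    have : LL (n+1) A B - RR (n+1) (A + B) = 0 := by
      rw [cA]
      simpa using cB
    linarith

theorem S0_eq_S (n : ℕ) (A B : ℝ) :
    ∑ k ∈ Finset.range (n + 1), gbinom (A + k) (n - k) * gbinom (B + n - k) k
      =
    ∑ p ∈ Finset.range (n / 2 + 1), gbinom (A + B + n - 1 - 2 * p) (n - 2 * p) := by
  exact key n A B
end

section
/- For every natural number n, every natural number r with r ≤ n, and every real number Z: C(Z+1, 2(n-r)) · C(Z-n+r, r) · (2(n-r))! · r! = C(Z, n) · ( C(Z-n+r, n-r) + 2·C(Z-n+r, n-r-1) ) · n! · (n-r)!, where the term C(Z-n+r, n-r-1) is taken to be 0 when r = n. -/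
lemma prod_desc_add (x : ℝ) (a b : ℕ) :
    (∏ i ∈ Finset.range (a + b), (x - i)) =
    (∏ i ∈ Finset.range a, (x - i)) * ∏ i ∈ Finset.range b, (x - a - i) := by
  induction b with
  | zero => simp
  | succ b ih =>
    rw [show a + (b + 1) = (a + b) + 1 from rfl, Finset.prod_range_succ, ih,
      Finset.prod_range_succ]
    push_cast; ring

theorem zagier_rhs_factor_identity (n r : ℕ) (hr : r ≤ n) (Z : ℝ) :
    gbinom (Z + 1) (2 * (n - r)) * gbinom (Z - n + r) r *
        ((2 * (n - r)).factorial : ℝ) * (r.factorial : ℝ)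
      =
    gbinom Z n *
        (gbinom (Z - n + r) (n - r)
          + 2 * (if r = n then 0 else gbinom (Z - n + r) (n - r - 1))) *
        (n.factorial : ℝ) * ((n - r).factorial : ℝ) := by
  rcases eq_or_lt_of_le hr with h | h
  · subst h
    simp [gbinom, Nat.sub_self]
  · have h' : r ≠ n := ne_of_lt h
    rw [if_neg h']
    obtain ⟨k, hk⟩ : ∃ k, n - r = k + 1 := ⟨n - r - 1, by omega⟩
    have hn : n = (k + 1) + r := by omega
    subst hn
    have hmr : (k + 1) + r - r = k + 1 := by omega
    rw [hmr]
    have hx : Z - ((k + 1 : ℕ) + r : ℕ) + r = Z - (k + 1 : ℕ) := by push_cast; ring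
    rw [hx]
    simp only [gbinom, Nat.add_sub_cancel]
    have hkey : (∏ i ∈ Finset.range (2 * (k + 1)), (Z + 1 - i))
        = (Z + 1) * (∏ i ∈ Finset.range (k + 1), (Z - i)) *
          ∏ i ∈ Finset.range k, (Z - (k + 1 : ℕ) - i) := by
      rw [show 2 * (k + 1) = 1 + ((k + 1) + k) from by ring, prod_desc_add,
        prod_desc_add]
      simp
      push_cast; ring
    have hn' : (∏ i ∈ Finset.range ((k + 1) + r), (Z - i))
        = (∏ i ∈ Finset.range (k + 1), (Z - i)) * ∏ i ∈ Finset.range r, (Z - (k + 1 : ℕ) - i) := by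
      rw [prod_desc_add]
    have hm : (∏ i ∈ Finset.range (k + 1), (Z - (k + 1 : ℕ) - i))
        = (∏ i ∈ Finset.range k, (Z - (k + 1 : ℕ) - i)) * (Z - (k + 1 : ℕ) - k) := by
      rw [Finset.prod_range_succ]
    rw [hkey, hn', hm]
    have hfac : ((k + 1).factorial : ℝ) = (k + 1) * (k.factorial : ℝ) := by
      rw [Nat.factorial_succ]; push_cast; ring
    rw [hfac]
    have f1 : ((2 * (k + 1)).factorial : ℝ) ≠ 0 := by positivity
    have f2 : (r.factorial : ℝ) ≠ 0 := by positivity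
    have f3 : (((k + 1) + r).factorial : ℝ) ≠ 0 := by positivity
    have f4 : (k.factorial : ℝ) ≠ 0 := by positivity
    field_simp
    push_cast
    ring
end

section
/- Let α : ℝ → ℝ be a smooth diffeomorphism with α'(x) > 0 for all x, and let β = α^{-1} denote its inverse. For a smooth function f : ℝ × (0,∞) → ℝ, define (α·f)(x,y) = f(β(x), y/β'(x)). Define the operators X and Y on smooth functions of (x,y) ∈ ℝ × (0,∞) by (Xg)(x,y) = (1/y)·∂g/∂x(x,y) and (Yg)(x,y) = -y·∂g/∂y(x,y), and define the function δ₁(α)(x,y) = (d/dx)(log β'(x)) / y = (β''(x)/β'(x)) / y. Then for every smooth f and all (x,y) ∈ ℝ × (0,∞): Y(α·f) = α·(Yf), and X(α·f) = α·(Xf) + δ₁(α) · (α·(Yf)). -/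
open Real

/-- The operator `X = (1/y) ∂/∂x` acting on functions of `(x, y) ∈ ℝ × (0,∞)`. -/
noncomputable def Xop (g : ℝ → ℝ → ℝ) : ℝ → ℝ → ℝ :=
  fun x y => (1 / y) * deriv (fun x' => g x' y) x

/-- The operator `Y = -y ∂/∂y` acting on functions of `(x, y) ∈ ℝ × (0,∞)`. -/
noncomputable def Yop (g : ℝ → ℝ → ℝ) : ℝ → ℝ → ℝ :=
  fun x y => -y * deriv (fun y' => g x y') y

/-- The action `(α·f)(x,y) = f(β(x), y/β'(x))`, where `β = α⁻¹`. -/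
noncomputable def act (β : ℝ → ℝ) (f : ℝ → ℝ → ℝ) : ℝ → ℝ → ℝ :=
  fun x y => f (β x) (y / deriv β x)

/-- `δ₁(α)(x,y) = (d/dx)(log β'(x)) / y = (β''(x)/β'(x)) / y`, where `β = α⁻¹`. -/
noncomputable def delta1 (β : ℝ → ℝ) : ℝ → ℝ → ℝ :=
  fun x y => (deriv (deriv β) x / deriv β x) / y

theorem XY_commutation_with_action
    (α β : ℝ → ℝ) (hα : ContDiff ℝ (⊤ : ℕ∞) α) (hβ : ContDiff ℝ (⊤ : ℕ∞) β)
    (hβα : Function.LeftInverse β α) (hαβ : Function.LeftInverse α β)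
    (hα' : ∀ x, 0 < deriv α x)
    (f : ℝ → ℝ → ℝ)
    (hf : ContDiffOn ℝ (⊤ : ℕ∞) (fun p : ℝ × ℝ => f p.1 p.2) {p : ℝ × ℝ | 0 < p.2})
    (x y : ℝ) (hy : 0 < y) :
    Yop (act β f) x y = act β (Yop f) x y ∧
    Xop (act β f) x y = act β (Xop f) x y + delta1 β x y * act β (Yop f) x y := by
  have hopen : IsOpen {p : ℝ × ℝ | 0 < p.2} := isOpen_lt continuous_const continuous_snd
  have hβd : Differentiable ℝ β := hβ.differentiable (by simp)
  have hαd : Differentiable ℝ α := hα.differentiable (by simp)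
  have hβ'pos : ∀ z, 0 < deriv β z := by
    intro z
    have h1 : deriv (α ∘ β) z = deriv α (β z) * deriv β z := deriv_comp z (hαd _) (hβd _)
    have h2 : deriv (α ∘ β) z = 1 := by
      have hid : (α ∘ β) = id := funext hαβ
      rw [hid, deriv_id]
    have h3 : deriv α (β z) * deriv β z = 1 := by rw [← h1, h2]
    have := hα' (β z)
    nlinarith
  set b := β x with hb
  set d := deriv β x with hd_def
  set d' := deriv (deriv β) x with hd'_def
  have hd : 0 < d := hβ'pos x
  have hdne : d ≠ 0 := ne_of_gt hd
  have hyne : y ≠ 0 := ne_of_gt hy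
  have hyd : 0 < y / d := div_pos hy hd
  have hFd : DifferentiableAt ℝ (fun p : ℝ × ℝ => f p.1 p.2) (b, y / d) :=
    (hf.differentiableOn (by simp)).differentiableAt (hopen.mem_nhds hyd)
  set F := fun p : ℝ × ℝ => f p.1 p.2 with hF_def
  set L := fderiv ℝ F (b, y / d) with hL_def
  have hF : HasFDerivAt F L (b, y / d) := hFd.hasFDerivAt
  have h1 : HasDerivAt (fun x' => f x' (y / d)) (L (1, 0)) b := by
    have hg : HasDerivAt (fun x' : ℝ => (x', y / d)) ((1 : ℝ), (0 : ℝ)) b :=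
      (hasDerivAt_id b).prodMk (hasDerivAt_const b _)
    exact hF.comp_hasDerivAt b hg
  have h2 : HasDerivAt (fun y' => f b y') (L (0, 1)) (y / d) := by
    have hg : HasDerivAt (fun y' : ℝ => (b, y')) ((0 : ℝ), (1 : ℝ)) (y / d) :=
      (hasDerivAt_const _ _).prodMk (hasDerivAt_id _)
    exact hF.comp_hasDerivAt _ hg
  -- Y part
  have hYact : HasDerivAt (fun y' => f b (y' / d)) (L (0, 1) * (1 / d)) y := by
    have hdiv : HasDerivAt (fun y' : ℝ => y' / d) (1 / d) y := by
      simpa using (hasDerivAt_id y).div_const d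
    have hyd_eq : y / d = (fun y' : ℝ => y' / d) y := rfl
    exact (hyd_eq ▸ h2).comp y hdiv
  have hYgoal : Yop (act β f) x y = act β (Yop f) x y := by
    simp only [Yop, act, ← hb, ← hd_def]
    rw [hYact.deriv, h2.deriv]
    field_simp
  refine ⟨hYgoal, ?_⟩
  -- X part
  have hβ'cd : ContDiff ℝ ((⊤:ℕ∞):WithTop ℕ∞) (deriv β) := (contDiff_infty_iff_deriv.mp (hβ.of_le (by simp))).2
  have hβ'x : HasDerivAt (deriv β) d' x := ((hβ'cd.differentiable (by simp)) x).hasDerivAt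
  have hγ2 : HasDerivAt (fun x' => y / deriv β x') (-(y * d') / d ^ 2) x := by
    have h := (hasDerivAt_const x y).div hβ'x hdne
    rw [show (-(y * d') / d ^ 2) = (0 * deriv β x - y * d') / deriv β x ^ 2 by rw [← hd_def]; ring]
    exact h
  have hγ : HasDerivAt (fun x' => ((β x', y / deriv β x') : ℝ × ℝ)) ((d, -(y * d') / d ^ 2)) x := by
    have hb' : HasDerivAt β d x := (hβd x).hasDerivAt
    exact hb'.prodMk hγ2
  have hXact : HasDerivAt (fun x' => f (β x') (y / deriv β x'))
      (L ((d, -(y * d') / d ^ 2))) x := by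
    exact hF.comp_hasDerivAt x hγ
  have hLlin : L ((d, -(y * d') / d ^ 2)) = d * L (1, 0) + (-(y * d') / d ^ 2) * L (0, 1) := by
    have hsum : ((d, -(y * d') / d ^ 2) : ℝ × ℝ)
        = d • ((1 : ℝ), (0 : ℝ)) + (-(y * d') / d ^ 2) • ((0 : ℝ), (1 : ℝ)) := by
      simp [Prod.ext_iff]
    rw [hsum, map_add, map_smul, map_smul, smul_eq_mul, smul_eq_mul]
  simp only [Xop, act, Yop, delta1, ← hb, ← hd_def, ← hd'_def]
  rw [hXact.deriv, hLlin, h1.deriv, h2.deriv]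
  field_simp
end
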